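/- Monotonicity of glucose in insulin input: if x₁, x₂ : [0,∞) → ℝ are continuous nonnegative functions with x₁(t) ≥ x₂(t) for all t and x₁(t) > x₂(t) on some interval (0, ε), and g₁, g₂ solve ġᵢ = -(xᵢ(t) + G) gᵢ + w(t) with the same initial condition g₁(0) = g₂(0) > 0 and same continuous bounded w ≥ E > 0 and G > 0, then g₁(t) ≤ g₂(t) for all t ≥ 0, with strict inequality for t ∈ (0, ε]. -/

import Mathlib

/-!
Multiplying a solution of `ġ = -a g + b` by the integrating factor `exp (∫₀ᵗ a)` turns the
equation into `(g · exp ∫ a)' = b · exp ∫ a`, so the sign of `g` is controlled by the sign of the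
forcing `b`. With forcing `w > 0` this keeps `g₁` positive. The difference `g₂ - g₁` solves the
same kind of equation with coefficient `x₂ + G` and forcing `(x₁ - x₂) g₁ ≥ 0`, which is
positive on `(0, ε)`, and it starts at `0`.
-/

open Set

noncomputable def integratingFactor (a : ℝ → ℝ) (t : ℝ) : ℝ :=
  Real.exp (∫ s in (0 : ℝ)..t, a s)

theorem integratingFactor_pos (a : ℝ → ℝ) (t : ℝ) : 0 < integratingFactor a t :=
  Real.exp_pos _

@[simp]
theorem integratingFactor_zero (a : ℝ → ℝ) : integratingFactor a 0 = 1 := by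
  simp [integratingFactor]

theorem hasDerivAt_integratingFactor {a : ℝ → ℝ} (ha : Continuous a) (t : ℝ) :
    HasDerivAt (integratingFactor a) (integratingFactor a t * a t) t :=
  (ha.integral_hasStrictDerivAt 0 t).hasDerivAt.exp

theorem HasDerivAt.mul_integratingFactor {a b g : ℝ → ℝ} {t : ℝ} (ha : Continuous a)
    (hg : HasDerivAt g (-a t * g t + b t) t) :
    HasDerivAt (fun s => g s * integratingFactor a s) (b t * integratingFactor a t) t :=
  (hg.mul (hasDerivAt_integratingFactor ha t)).congr_deriv (by ring)

section LinearODE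

variable {a b g : ℝ → ℝ} (ha : Continuous a)
  (hg : ∀ t, 0 ≤ t → HasDerivAt g (-a t * g t + b t) t)
include ha hg

theorem le_mul_integratingFactor_of_forcing_nonneg (hb : ∀ t, 0 < t → 0 ≤ b t) {t : ℝ}
    (ht : 0 ≤ t) : g 0 ≤ g t * integratingFactor a t := by
  have hmono : MonotoneOn (fun s => g s * integratingFactor a s) (Ici 0) := by
    refine monotoneOn_of_hasDerivWithinAt_nonneg (convex_Ici 0)
      (f' := fun s => b s * integratingFactor a s)
      (fun s hs => (hg s hs).mul_integratingFactor ha |>.continuousAt.continuousWithinAt)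
      (fun s hs => ?_) (fun s hs => ?_) <;> rw [interior_Ici] at hs
    · exact ((hg s hs.out.le).mul_integratingFactor ha).hasDerivWithinAt
    · exact mul_nonneg (hb s hs) (integratingFactor_pos a s).le
  simpa using hmono self_mem_Ici ht ht

theorem lt_mul_integratingFactor_of_forcing_pos {ε : ℝ} (hb : ∀ t ∈ Ioo 0 ε, 0 < b t) {t : ℝ}
    (ht : t ∈ Ioc 0 ε) : g 0 < g t * integratingFactor a t := by
  have hmono : StrictMonoOn (fun s => g s * integratingFactor a s) (Icc 0 ε) := by
    refine strictMonoOn_of_hasDerivWithinAt_pos (convex_Icc 0 ε)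
      (f' := fun s => b s * integratingFactor a s)
      (fun s hs => (hg s hs.1).mul_integratingFactor ha |>.continuousAt.continuousWithinAt)
      (fun s hs => ?_) (fun s hs => ?_) <;> rw [interior_Icc] at hs
    · exact ((hg s hs.1.le).mul_integratingFactor ha).hasDerivWithinAt
    · exact mul_pos (hb s hs) (integratingFactor_pos a s)
  simpa using hmono (left_mem_Icc.2 (ht.1.le.trans ht.2)) (Ioc_subset_Icc_self ht) ht.1

end LinearODE

theorem glucose_monotone_in_insulin_general
    (G E ε : ℝ) (hE : 0 < E)
    (x₁ x₂ w g₁ g₂ : ℝ → ℝ)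
    (hx₁c : Continuous x₁) (hx₂c : Continuous x₂)
    (hwlb : ∀ t, 0 ≤ t → E ≤ w t)
    (hge : ∀ t, 0 ≤ t → x₂ t ≤ x₁ t)
    (hgt : ∀ t, t ∈ Set.Ioo 0 ε → x₂ t < x₁ t)
    (hode₁ : ∀ t, 0 ≤ t → HasDerivAt g₁ (-(x₁ t + G) * g₁ t + w t) t)
    (hode₂ : ∀ t, 0 ≤ t → HasDerivAt g₂ (-(x₂ t + G) * g₂ t + w t) t)
    (hinit : g₁ 0 = g₂ 0) (hg0 : 0 < g₁ 0) :
    (∀ t, 0 ≤ t → g₁ t ≤ g₂ t) ∧ ∀ t, t ∈ Set.Ioc 0 ε → g₁ t < g₂ t := by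
  have hg₁pos : ∀ t, 0 ≤ t → 0 < g₁ t := fun t ht =>
    pos_of_mul_pos_left (hg0.trans_le <| le_mul_integratingFactor_of_forcing_nonneg
      (hx₁c.add continuous_const) hode₁ (fun s hs => hE.le.trans (hwlb s hs.le)) ht)
      (integratingFactor_pos _ t).le
  have hdiff : ∀ t, 0 ≤ t → HasDerivAt (g₂ - g₁)
      (-(x₂ t + G) * (g₂ - g₁) t + (x₁ t - x₂ t) * g₁ t) t := fun t ht =>
    ((hode₂ t ht).sub (hode₁ t ht)).congr_deriv (by simp only [Pi.sub_apply]; ring)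
  have hdiff0 : (g₂ - g₁) 0 = 0 := by simp [hinit]
  constructor
  · intro t ht
    have := le_mul_integratingFactor_of_forcing_nonneg (hx₂c.add continuous_const) hdiff
      (fun s hs => mul_nonneg (sub_nonneg.2 (hge s hs.le)) (hg₁pos s hs.le).le) ht
    rw [hdiff0] at this
    exact sub_nonneg.1 (nonneg_of_mul_nonneg_left this (integratingFactor_pos _ t))
  · intro t ht
    have := lt_mul_integratingFactor_of_forcing_pos (hx₂c.add continuous_const) hdiff
      (fun s hs => mul_pos (sub_pos.2 (hgt s hs)) (hg₁pos s hs.1.le)) ht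
    rw [hdiff0] at this
    exact sub_pos.1 (pos_of_mul_pos_left this (integratingFactor_pos _ t).le)

/-- Monotonicity of glucose in the insulin effectiveness. -/
theorem glucose_monotone_in_insulin
    (G E ε : ℝ) (hG : 0 < G) (hE : 0 < E) (hε : 0 < ε)
    (x₁ x₂ w g₁ g₂ : ℝ → ℝ)
    (hx₁c : Continuous x₁) (hx₂c : Continuous x₂)
    (hx₁nn : ∀ t, 0 ≤ t → 0 ≤ x₁ t) (hx₂nn : ∀ t, 0 ≤ t → 0 ≤ x₂ t)
    (hx₁bd : ∃ C, ∀ t, 0 ≤ t → x₁ t ≤ C) (hx₂bd : ∃ C, ∀ t, 0 ≤ t → x₂ t ≤ C)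
    (hwc : Continuous w) (hwbd : ∃ M, ∀ t, 0 ≤ t → w t ≤ M)
    (hwlb : ∀ t, 0 ≤ t → E ≤ w t)
    (hge : ∀ t, 0 ≤ t → x₂ t ≤ x₁ t)
    (hgt : ∀ t, t ∈ Set.Ioo 0 ε → x₂ t < x₁ t)
    (hode₁ : ∀ t, 0 ≤ t → HasDerivAt g₁ (-(x₁ t + G) * g₁ t + w t) t)
    (hode₂ : ∀ t, 0 ≤ t → HasDerivAt g₂ (-(x₂ t + G) * g₂ t + w t) t)
    (hinit : g₁ 0 = g₂ 0) (hg0 : 0 < g₁ 0) :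
    (∀ t, 0 ≤ t → g₁ t ≤ g₂ t) ∧ ∀ t, t ∈ Set.Ioc 0 ε → g₁ t < g₂ t :=
  glucose_monotone_in_insulin_general G E ε hE x₁ x₂ w g₁ g₂ hx₁c hx₂c hwlb hge hgt hode₁ hode₂
    hinit hg0
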